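/- arXiv:1708.02503 — 3 statements merged into one kernel-verified Lean document; each statement's English description precedes it below -/
import Mathlib

section
/- Let d ≥ 1 and let G ⊆ ℝ^d be a nonempty bounded open set. Let X = C₀(ℝ^d) with the supremum norm and Y = {φ ∈ X : φ(x) = 0 for all x ∉ G}. Let s : (0, ∞) → (0, ∞) satisfy s(t) → 0 as t → 0+, and for each t > 0 let χ_t : ℝ^d → ℝ be continuous with 0 ≤ χ_t ≤ 1, χ_t(x) = 0 for x ∉ G, χ_t(x) = 1 for all x ∈ G_{s(t)} := {x ∈ G : dist(x, ∂G) > s(t)}, and suppose the map t ↦ χ_t is continuous from (0, ∞) to the bounded continuous functions with the supremum norm. Let ℰ : Y → X be a linear map with ‖ℰφ‖_X = ‖φ‖_X and (ℰφ)(x) = φ(x) for all x in the closure of G, for every φ ∈ Y. Let (F(t))_{t≥0} be a strongly continuous family of bounded linear operators on X with F(0) = Id. Define F_o(0) := Id and F_o(t)φ := χ_t · (F(t)(ℰφ)) for t > 0 and φ ∈ Y. Then the family (F_o(t))_{t≥0} is strongly continuous on Y: for every φ ∈ Y, the map t ↦ F_o(t)φ is continuous from [0, ∞) to Y. -/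
open ZeroAtInfty Filter Topology Metric

/-- `Y = C₀(G)`, realized as the closed subspace of `X = C₀(ℝ^d)` consisting of the
functions vanishing outside `G` (extension by zero). -/
noncomputable def Ysub (d : ℕ) (G : Set (EuclideanSpace ℝ (Fin d))) :
    Submodule ℝ C₀(EuclideanSpace ℝ (Fin d), ℝ) where
  carrier := {φ | ∀ x ∉ G, φ x = 0}
  add_mem' := by
    intro a b ha hb x hx
    simp [ha x hx, hb x hx]
  zero_mem' := by intro x hx; simp
  smul_mem' := by
    intro c a ha x hx
    simp [ha x hx]

/-- Strong continuity part of Lemma 3.4 of the paper: the family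
`F_o(0) = Id`, `F_o(t)φ = χ_t · F(t)(ℰφ)` is strongly continuous on `Y = C₀(G)`
whenever `(F(t))_{t≥0}` is strongly continuous on `X = C₀(ℝ^d)`. -/
theorem cutoff_family_strongly_continuous
    (d : ℕ) (hd : 1 ≤ d) (G : Set (EuclideanSpace ℝ (Fin d)))
    (hGne : G.Nonempty) (hGopen : IsOpen G) (hGbdd : Bornology.IsBounded G)
    (s : ℝ → ℝ) (hspos : ∀ t : ℝ, 0 < t → 0 < s t)
    (hs0 : Tendsto s (𝓝[>] 0) (𝓝 0))
    (χ : ℝ → BoundedContinuousFunction (EuclideanSpace ℝ (Fin d)) ℝ)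
    (hχ01 : ∀ t : ℝ, 0 < t → ∀ x, 0 ≤ χ t x ∧ χ t x ≤ 1)
    (hχ0 : ∀ t : ℝ, 0 < t → ∀ x ∉ G, χ t x = 0)
    (hχ1 : ∀ t : ℝ, 0 < t → ∀ x ∈ G, s t < infDist x (frontier G) → χ t x = 1)
    (hχcont : ContinuousOn χ (Set.Ioi (0 : ℝ)))
    (ℰ : Ysub d G →ₗ[ℝ] C₀(EuclideanSpace ℝ (Fin d), ℝ))
    (hℰnorm : ∀ φ : Ysub d G, ‖ℰ φ‖ = ‖φ‖)
    (hℰext : ∀ (φ : Ysub d G) (x : EuclideanSpace ℝ (Fin d)), x ∈ closure G →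
      (ℰ φ) x = (φ : C₀(EuclideanSpace ℝ (Fin d), ℝ)) x)
    (F : ℝ → C₀(EuclideanSpace ℝ (Fin d), ℝ) →L[ℝ] C₀(EuclideanSpace ℝ (Fin d), ℝ))
    (hF0 : F 0 = 1)
    (hFcont : ∀ φ : C₀(EuclideanSpace ℝ (Fin d), ℝ),
      ContinuousOn (fun t => F t φ) (Set.Ici (0 : ℝ)))
    (Fo : ℝ → Ysub d G → Ysub d G)
    (hFo0 : Fo 0 = id)
    (hFo : ∀ t : ℝ, 0 < t → ∀ (φ : Ysub d G) (x : EuclideanSpace ℝ (Fin d)),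
      ((Fo t φ : C₀(EuclideanSpace ℝ (Fin d), ℝ)) x) = χ t x * (F t (ℰ φ)) x) :
    ∀ φ : Ysub d G, ContinuousOn (fun t => Fo t φ) (Set.Ici (0 : ℝ)) := by
  intro φ
  classical
  set f : C₀(EuclideanSpace ℝ (Fin d), ℝ) := (φ : C₀(EuclideanSpace ℝ (Fin d), ℝ)) with hf
  set ψ : C₀(EuclideanSpace ℝ (Fin d), ℝ) := ℰ φ with hψ
  have hfG : ∀ x ∉ G, f x = 0 := φ.2
  haveI : Nonempty (Fin d) := ⟨⟨0, hd⟩⟩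
  -- the frontier of G is nonempty
  have hGne_univ : G ≠ Set.univ := by
    intro h
    obtain ⟨R, hR⟩ := hGbdd.subset_closedBall 0
    obtain ⟨y, hy⟩ := NormedSpace.exists_lt_norm ℝ (EuclideanSpace ℝ (Fin d)) R
    have hyG : y ∈ G := h ▸ Set.mem_univ y
    have := hR hyG
    rw [Metric.mem_closedBall, dist_zero_right] at this
    linarith
  have hfr : (frontier G).Nonempty := nonempty_frontier_iff.mpr ⟨hGne, hGne_univ⟩
  -- frontier points are outside G
  have hfrG : ∀ y ∈ frontier G, y ∉ G := by
    intro y hy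
    rw [hGopen.frontier_eq] at hy
    exact hy.2
  -- reduce to continuity of the BCF-valued map
  have hind : Topology.IsInducing
      (fun ξ : Ysub d G => ((ξ : C₀(EuclideanSpace ℝ (Fin d), ℝ)).toBCF)) := by
    exact (ZeroAtInftyContinuousMap.isometry_toBCF.isUniformInducing.isInducing).comp
      Topology.IsInducing.subtypeVal
  rw [hind.continuousOn_iff]
  -- the candidate limit function on (0, ∞)
  set g : ℝ → BoundedContinuousFunction (EuclideanSpace ℝ (Fin d)) ℝ :=
    fun t => χ t * (F t ψ).toBCF with hg
  have hgcont : ContinuousOn g (Set.Ioi (0 : ℝ)) := by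
    apply hχcont.mul
    exact ZeroAtInftyContinuousMap.isometry_toBCF.continuous.comp_continuousOn
      ((hFcont ψ).mono Set.Ioi_subset_Ici_self)
  have hgeq : ∀ t ∈ Set.Ioi (0 : ℝ),
      ((Fo t φ : C₀(EuclideanSpace ℝ (Fin d), ℝ)).toBCF) = g t := by
    intro t ht
    ext x
    exact hFo t ht φ x
  have hFo0' : (Fo 0 φ : C₀(EuclideanSpace ℝ (Fin d), ℝ)) = f := by
    rw [hFo0]; rfl
  intro t₀ ht₀
  rcases (Set.mem_Ici.mp ht₀).lt_or_eq with ht₀pos | ht₀eq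
  · -- t₀ > 0 : use continuity of g near t₀
    have hmem : Set.Ioi (0 : ℝ) ∈ 𝓝 t₀ := Ioi_mem_nhds ht₀pos
    have h2 : ContinuousAt g t₀ := (hgcont t₀ ht₀pos).continuousAt hmem
    have hev : (fun t => ((Fo t φ : C₀(EuclideanSpace ℝ (Fin d), ℝ)).toBCF))
        =ᶠ[𝓝[Set.Ici (0:ℝ)] t₀] g :=
      Filter.eventuallyEq_of_mem (mem_nhdsWithin_of_mem_nhds hmem) hgeq
    show ContinuousWithinAt
      (fun t => ((Fo t φ : C₀(EuclideanSpace ℝ (Fin d), ℝ)).toBCF)) (Set.Ici 0) t₀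
    exact (h2.continuousWithinAt.congr_of_eventuallyEq hev
      (hgeq t₀ ht₀pos))
  · -- t₀ = 0 : the hard case
    subst ht₀eq
    have hpart : Tendsto g (𝓝[>] (0:ℝ)) (𝓝 f.toBCF) := by
      rw [Metric.tendsto_nhds]
      intro ε hε
      -- uniform continuity of f
      obtain ⟨δ, hδpos, hδ⟩ := Metric.uniformContinuous_iff.mp
        (ZeroAtInftyContinuousMap.uniformContinuous f) (ε/3) (by positivity)
      -- F t ψ → ψ
      have hF00 : F 0 ψ = ψ := by rw [hF0]; rfl
      have hFt : Tendsto (fun t => F t ψ) (𝓝[>] (0:ℝ)) (𝓝 ψ) := by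
        have := (hFcont ψ 0 Set.self_mem_Ici)
        rw [ContinuousWithinAt, hF00] at this
        exact this.mono_left (nhdsWithin_mono _ Set.Ioi_subset_Ici_self)
      have hFev : ∀ᶠ t in 𝓝[>] (0:ℝ), ‖F t ψ - ψ‖ < ε/3 := by
        have := Metric.tendsto_nhds.mp hFt (ε/3) (by positivity)
        filter_upwards [this] with t ht
        rwa [dist_eq_norm] at ht
      have hsev : ∀ᶠ t in 𝓝[>] (0:ℝ), s t < δ := hs0.eventually_lt_const hδpos
      filter_upwards [hFev, hsev, self_mem_nhdsWithin] with t h1 h2 h3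
      rw [dist_eq_norm]
      have h3' : (0:ℝ) < t := h3
      refine lt_of_le_of_lt (a := ‖g t - f.toBCF‖) (b := ε/3 + ε/3) ?_ (by linarith)
      rw [BoundedContinuousFunction.norm_le (by positivity)]
      intro x
      simp only [BoundedContinuousFunction.coe_sub, Pi.sub_apply, hg,
        BoundedContinuousFunction.coe_mul, Pi.mul_apply]
      by_cases hx : x ∈ G
      · have hfx : ψ x = f x := hℰext φ x (subset_closure hx)
        have key : χ t x * (F t ψ).toBCF x - f.toBCF x
            = χ t x * ((F t ψ) x - ψ x) + (χ t x - 1) * f x := by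
          show χ t x * (F t ψ) x - f x = _
          rw [← hfx]; ring
        rw [key]
        have hb1 : ‖χ t x * ((F t ψ) x - ψ x)‖ ≤ ε/3 := by
          rw [norm_mul]
          have hc := hχ01 t h3' x
          have hval : ‖(F t ψ) x - ψ x‖ ≤ ‖F t ψ - ψ‖ := by
            have := (F t ψ - ψ).toBCF.norm_coe_le_norm x
            rwa [ZeroAtInftyContinuousMap.norm_toBCF_eq_norm] at this
          calc ‖χ t x‖ * ‖(F t ψ) x - ψ x‖ ≤ 1 * ‖F t ψ - ψ‖ := by
                apply mul_le_mul _ hval (norm_nonneg _) zero_le_one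
                rw [Real.norm_eq_abs, abs_le]; exact ⟨by linarith [hc.1], hc.2⟩
            _ ≤ ε/3 := by rw [one_mul]; linarith
        have hb2 : ‖(χ t x - 1) * f x‖ ≤ ε/3 := by
          by_cases hdist : s t < infDist x (frontier G)
          · rw [hχ1 t h3' x hx hdist]; simp; positivity
          · push_neg at hdist
            have hlt : infDist x (frontier G) < δ := lt_of_le_of_lt hdist h2
            obtain ⟨y, hyfr, hxy⟩ := (Metric.infDist_lt_iff hfr).mp hlt
            have hfy : f y = 0 := hfG y (hfrG y hyfr)
            have hfxs : ‖f x‖ < ε/3 := by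
              have := hδ hxy
              rwa [dist_eq_norm, hfy, sub_zero] at this
            rw [norm_mul]
            have hc := hχ01 t h3' x
            calc ‖χ t x - 1‖ * ‖f x‖ ≤ 1 * ‖f x‖ := by
                  apply mul_le_mul_of_nonneg_right _ (norm_nonneg _)
                  rw [Real.norm_eq_abs, abs_le]; constructor <;> linarith [hc.1, hc.2]
              _ ≤ ε/3 := by rw [one_mul]; linarith
        calc ‖χ t x * ((F t ψ) x - ψ x) + (χ t x - 1) * f x‖
            ≤ ‖χ t x * ((F t ψ) x - ψ x)‖ + ‖(χ t x - 1) * f x‖ := norm_add_le _ _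
          _ ≤ ε/3 + ε/3 := add_le_add hb1 hb2
      · have hχx : χ t x = 0 := hχ0 t h3' x hx
        have hfx : f x = 0 := hfG x hx
        show ‖χ t x * (F t ψ) x - f x‖ ≤ ε/3 + ε/3
        rw [hχx, hfx, zero_mul, sub_zero, norm_zero]
        positivity
    -- combine with the value at 0
    have hmain : Tendsto (fun t => ((Fo t φ : C₀(EuclideanSpace ℝ (Fin d), ℝ)).toBCF))
        (𝓝[Set.Ici (0:ℝ)] 0) (𝓝 f.toBCF) := by
      rw [← Set.Ioi_insert, nhdsWithin_insert, Filter.tendsto_sup]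
      constructor
      · have : ((Fo 0 φ : C₀(EuclideanSpace ℝ (Fin d), ℝ)).toBCF) = f.toBCF := by
          rw [hFo0']
        exact this ▸ tendsto_pure_nhds
          (fun t => ((Fo t φ : C₀(EuclideanSpace ℝ (Fin d), ℝ)).toBCF)) 0
      · exact hpart.congr' (Filter.eventuallyEq_of_mem self_mem_nhdsWithin
          (fun t ht => (hgeq t ht).symm))
    have : ((fun ξ : Ysub d G => ((ξ : C₀(EuclideanSpace ℝ (Fin d), ℝ)).toBCF)) ∘
        (fun t => Fo t φ)) 0 = f.toBCF := by
      simp only [Function.comp_apply, hFo0']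
    rw [ContinuousWithinAt, this]
    exact hmain
end

section
/- Let d ≥ 1 and let G ⊆ ℝ^d be a nonempty bounded open set. Let X = C₀(ℝ^d) with the supremum norm and Y = {φ ∈ X : φ(x) = 0 for all x ∉ G}. Let s : (0, ∞) → (0, ∞) satisfy s(t)/t → 0 as t → 0+, and for each t > 0 let χ_t : ℝ^d → ℝ satisfy 0 ≤ χ_t ≤ 1 and χ_t(x) = 1 for all x ∈ G_{s(t)} := {x ∈ G : dist(x, ∂G) > s(t)}. Let (F(t))_{t>0} be bounded linear operators on X. Let φ ∈ Y be such that the restriction of φ to the closure of G is Lipschitz with some constant M ≥ 0, let Φ ∈ X satisfy Φ(x) = φ(x) for all x in the closure of G, let ψ ∈ Y, and let g ∈ X satisfy g(x) = ψ(x) for all x ∈ G. Assume ‖(F(t)Φ − Φ)/t − g‖_X → 0 as t → 0+. Then sup_{x ∈ G} | (χ_t(x)·(F(t)Φ)(x) − φ(x))/t − ψ(x) | → 0 as t → 0+. -/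
open ZeroAtInfty Filter Topology Metric

/-- Key derivative-at-zero estimate from the proof of Theorem 3.5 of the paper:
if `(F(t)Φ − Φ)/t → g` in `X = C₀(ℝ^d)`, where `Φ` extends `φ ∈ C₀(G)` and `g`
agrees on `G` with `ψ ∈ C₀(G)`, and `φ` is Lipschitz on the closure of `G`, then
`sup_{x ∈ G} |(χ_t(x)(F(t)Φ)(x) − φ(x))/t − ψ(x)| → 0` as `t → 0+`,
provided `s(t)/t → 0` and the cutoffs `χ_t` equal `1` on `G_{s(t)}`. -/
theorem cutoff_derivative_at_zero
    (d : ℕ) (hd : 1 ≤ d) (G : Set (EuclideanSpace ℝ (Fin d)))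
    (hGne : G.Nonempty) (hGopen : IsOpen G) (hGbdd : Bornology.IsBounded G)
    (s : ℝ → ℝ) (hspos : ∀ t : ℝ, 0 < t → 0 < s t)
    (hs : Tendsto (fun t => s t / t) (𝓝[>] 0) (𝓝 0))
    (χ : ℝ → EuclideanSpace ℝ (Fin d) → ℝ)
    (hχ01 : ∀ t : ℝ, 0 < t → ∀ x, 0 ≤ χ t x ∧ χ t x ≤ 1)
    (hχ1 : ∀ t : ℝ, 0 < t → ∀ x ∈ G, s t < infDist x (frontier G) → χ t x = 1)
    (F : ℝ → C₀(EuclideanSpace ℝ (Fin d), ℝ) →L[ℝ] C₀(EuclideanSpace ℝ (Fin d), ℝ))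
    (φ : C₀(EuclideanSpace ℝ (Fin d), ℝ)) (hφY : ∀ x ∉ G, φ x = 0)
    (M : NNReal) (hφLip : LipschitzOnWith M (⇑φ) (closure G))
    (Φ : C₀(EuclideanSpace ℝ (Fin d), ℝ)) (hΦ : ∀ x ∈ closure G, Φ x = φ x)
    (ψ : C₀(EuclideanSpace ℝ (Fin d), ℝ)) (hψY : ∀ x ∉ G, ψ x = 0)
    (g : C₀(EuclideanSpace ℝ (Fin d), ℝ)) (hg : ∀ x ∈ G, g x = ψ x)
    (hFlim : Tendsto (fun t : ℝ => ‖t⁻¹ • (F t Φ - Φ) - g‖) (𝓝[>] 0) (𝓝 0)) :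
    ∀ ε > (0 : ℝ), ∃ δ > (0 : ℝ), ∀ t : ℝ, 0 < t → t < δ →
      ∀ x ∈ G, |(χ t x * (F t Φ) x - φ x) / t - ψ x| < ε := by
  intro ε hε
  have hε3 : (0:ℝ) < ε / 3 := by linarith
  -- frontier of G is nonempty and compact
  haveI : Nonempty (Fin d) := ⟨⟨0, hd⟩⟩
  have hfr_ne : (frontier G).Nonempty := by
    rcases Set.eq_empty_or_nonempty (frontier G) with h | h
    · exfalso
      have hclopen : IsClopen G := isClopen_iff_frontier_eq_empty.mpr h
      rcases isClopen_iff.mp hclopen with h1 | h1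
      · exact hGne.ne_empty h1
      · exact NormedSpace.unbounded_univ ℝ (EuclideanSpace ℝ (Fin d)) (h1 ▸ hGbdd)
    · exact h
  have hfr_cpt : IsCompact (frontier G) := by
    apply Metric.isCompact_of_isClosed_isBounded isClosed_frontier
    exact hGbdd.closure.subset frontier_subset_closure
  -- uniform continuity of ψ
  obtain ⟨η, hη, hψuc⟩ := Metric.uniformContinuous_iff.mp
    (ZeroAtInftyContinuousMap.uniformContinuous ψ) (ε / 3) hε3
  -- pointwise bounds near the boundary
  have hbdry : ∀ t : ℝ, 0 < t → ∀ x ∈ G, infDist x (frontier G) ≤ s t →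
      |φ x| ≤ (M : ℝ) * s t ∧ (s t < η → |ψ x| < ε / 3) := by
    intro t ht x hx hxd
    obtain ⟨y, hy, hxy⟩ := hfr_cpt.exists_infDist_eq_dist hfr_ne x
    have hyG : y ∉ G := fun hyG => (hGopen.frontier_eq ▸ hy).2 hyG
    have hdxy : dist x y ≤ s t := hxy ▸ hxd
    constructor
    · have := hφLip.dist_le_mul x (subset_closure hx) y (frontier_subset_closure hy)
      rw [hφY y hyG] at this
      simpa [Real.dist_eq] using this.trans (by
        exact mul_le_mul_of_nonneg_left hdxy M.coe_nonneg)
    · intro hst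
      have := hψuc (a := x) (b := y) (lt_of_le_of_lt hdxy hst)
      rw [hψY y hyG] at this
      simpa [Real.dist_eq] using this
  -- combine the eventual statements
  have hev : ∀ᶠ t in 𝓝[>] (0:ℝ), s t / t < (ε/3) / ((M:ℝ) + 1) ∧ s t < η ∧
      ‖t⁻¹ • (F t Φ - Φ) - g‖ < ε / 3 := by
    have h1 : ∀ᶠ t in 𝓝[>] (0:ℝ), s t / t < (ε/3) / ((M:ℝ) + 1) :=
      hs.eventually (eventually_lt_nhds (by positivity))
    have hst : Tendsto s (𝓝[>] (0:ℝ)) (𝓝 0) := by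
      have hid : Tendsto (fun t : ℝ => t) (𝓝[>] (0:ℝ)) (𝓝 0) :=
        tendsto_id.mono_left nhdsWithin_le_nhds
      have := hs.mul hid
      rw [zero_mul] at this
      refine this.congr' ?_
      filter_upwards [self_mem_nhdsWithin] with t ht
      exact div_mul_cancel₀ _ (ne_of_gt ht)
    have h2 : ∀ᶠ t in 𝓝[>] (0:ℝ), s t < η := hst.eventually (eventually_lt_nhds hη)
    have h3 : ∀ᶠ t in 𝓝[>] (0:ℝ), ‖t⁻¹ • (F t Φ - Φ) - g‖ < ε / 3 := by
      have := hFlim.eventually (eventually_lt_nhds hε3)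
      filter_upwards [this] with t ht using lt_of_le_of_lt (le_abs_self _) (by
        simpa [Real.norm_eq_abs] using ht)
    exact h1.and (h2.and h3)
  obtain ⟨δ, hδ, hδ'⟩ := Metric.mem_nhdsWithin_iff.mp hev
  refine ⟨δ, hδ, fun t ht htδ x hx => ?_⟩
  have htmem : t ∈ Metric.ball (0:ℝ) δ ∩ Set.Ioi 0 :=
    ⟨by simpa [Real.dist_eq, abs_of_pos ht] using htδ, ht⟩
  obtain ⟨hA, hB, hC⟩ := hδ' htmem
  -- pointwise bound from the norm
  have hnorm : |(F t Φ x - Φ x) / t - g x| < ε / 3 := by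
    have := ZeroAtInftyContinuousMap.norm_toBCF_eq_norm
      (f := t⁻¹ • (F t Φ - Φ) - g) ▸
      BoundedContinuousFunction.norm_coe_le_norm ((t⁻¹ • (F t Φ - Φ) - g).toBCF) x
    have heval : ((t⁻¹ • (F t Φ - Φ) - g).toBCF) x = (F t Φ x - Φ x) / t - g x := by
      simp [div_eq_inv_mul]
    rw [heval] at this
    exact lt_of_le_of_lt (by simpa [Real.norm_eq_abs] using this) hC
  have hΦx : Φ x = φ x := hΦ x (subset_closure hx)
  have hgx : g x = ψ x := hg x hx
  obtain ⟨hχ0, hχle⟩ := hχ01 t ht x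
  -- key algebraic identity
  have key : (χ t x * (F t Φ) x - φ x) / t - ψ x
      = χ t x * ((F t Φ x - Φ x) / t - g x) + (χ t x - 1) * (φ x / t + ψ x) := by
    rw [hΦx, hgx]
    field_simp
    ring
  by_cases hcase : s t < infDist x (frontier G)
  · have h1 : χ t x = 1 := hχ1 t ht x hx hcase
    rw [key, h1]
    have heq : (1:ℝ) * ((F t Φ x - Φ x) / t - g x) + ((1:ℝ) - 1) * (φ x / t + ψ x)
        = (F t Φ x - Φ x) / t - g x := by ring
    rw [heq]
    linarith
  · push_neg at hcase
    obtain ⟨hφb, hψb⟩ := hbdry t ht x hx hcase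
    have hψb' := hψb hB
    have hφdiv : |φ x| / t ≤ (M : ℝ) * (s t / t) := by
      rw [div_le_iff₀ ht]
      calc |φ x| ≤ (M:ℝ) * s t := hφb
        _ = (M:ℝ) * (s t / t) * t := by field_simp
    have hMst : (M : ℝ) * (s t / t) < ε / 3 := by
      have hstn : 0 ≤ s t / t := div_nonneg (hspos t ht).le ht.le
      calc (M:ℝ) * (s t / t) ≤ ((M:ℝ) + 1) * (s t / t) := by nlinarith
        _ < ((M:ℝ) + 1) * ((ε/3) / ((M:ℝ)+1)) := by
            apply mul_lt_mul_of_pos_left hA; positivity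
        _ = ε / 3 := by field_simp
    rw [key]
    have hterm2 : |(χ t x - 1) * (φ x / t + ψ x)| ≤ |φ x / t + ψ x| := by
      rw [abs_mul]
      have : |χ t x - 1| ≤ 1 := by rw [abs_le]; constructor <;> linarith
      nlinarith [abs_nonneg (φ x / t + ψ x)]
    have hterm1 : |χ t x * ((F t Φ x - Φ x) / t - g x)| < ε / 3 := by
      rw [abs_mul, abs_of_nonneg hχ0]
      calc χ t x * |(F t Φ x - Φ x) / t - g x| ≤ 1 * |(F t Φ x - Φ x) / t - g x| := by
            nlinarith [abs_nonneg ((F t Φ x - Φ x) / t - g x)]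
        _ < ε / 3 := by rw [one_mul]; exact hnorm
    have habs : |φ x / t + ψ x| < ε / 3 + ε / 3 := by
      calc |φ x / t + ψ x| ≤ |φ x / t| + |ψ x| := abs_add_le _ _
        _ = |φ x| / t + |ψ x| := by rw [abs_div, abs_of_pos ht]
        _ < ε / 3 + ε / 3 := by
            have := lt_of_le_of_lt hφdiv hMst; linarith
    calc |χ t x * ((F t Φ x - Φ x) / t - g x) + (χ t x - 1) * (φ x / t + ψ x)|
        ≤ |χ t x * ((F t Φ x - Φ x) / t - g x)| + |(χ t x - 1) * (φ x / t + ψ x)| :=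
          abs_add_le _ _
      _ < ε / 3 + (ε / 3 + ε / 3) := by
          have := hterm2.trans_lt habs; linarith
      _ = ε := by ring
end

section
/- Let X be a real Banach space and f₀ ∈ X. Let (T_τ)_{τ≥0} and (F(τ))_{τ≥0} be families of bounded linear operators on X with ‖T_τ‖ ≤ 1 and ‖F(τ)‖ ≤ 1 for all τ ≥ 0. Assume that the map τ ↦ T_τ f₀ is continuous, that for each n ∈ ℕ the map τ ↦ [F(τ/n)]^n f₀ is strongly Borel measurable, and that for every R > 0, sup_{τ ∈ [0, R]} ‖[F(τ/n)]^n f₀ − T_τ f₀‖ → 0 as n → ∞. Let (ν_t)_{t≥0} be a family of Borel probability measures on [0, ∞) with the uniform tail property: for every T > 0 and ε > 0 there exists R > 0 such that ν_t([R, ∞)) < ε for all t ∈ [0, T]. Define f(t) := ∫₀^∞ T_τ f₀ dν_t(τ) and f_n(t) := ∫₀^∞ [F(τ/n)]^n f₀ dν_t(τ) as Bochner integrals. Then for every T > 0, sup_{t ∈ [0, T]} ‖f_n(t) − f(t)‖ → 0 as n → ∞. -/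
/-!
On `[0, R]` the integrands `[F(τ/n)]ⁿ f₀` converge to `T_τ f₀` uniformly, while on `[R, ∞)` both
are bounded by `‖f₀‖`; by the uniform tail property the measures `ν_t`, `t ∈ [0, T]`, give `[R, ∞)`
uniformly small mass, so the integrals of the difference over `[0, R]` and over its complement are
both uniformly small.
-/

open MeasureTheory Filter Topology

theorem ContinuousLinearMap.norm_pow_apply_le {𝕜 E : Type*} [NontriviallyNormedField 𝕜]
    [SeminormedAddCommGroup E] [NormedSpace 𝕜 E] {A : E →L[𝕜] E} (hA : ‖A‖ ≤ 1) (n : ℕ) (x : E) :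
    ‖(A ^ n) x‖ ≤ ‖x‖ := by
  induction n with
  | zero => simp
  | succ n ih =>
    rw [pow_succ']
    exact ((A.le_of_opNorm_le hA _).trans_eq (one_mul _)).trans ih

section

variable {α E : Type*} [MeasurableSpace α] [NormedAddCommGroup E] [NormedSpace ℝ E]

theorem norm_integral_le_of_norm_le_const_on {μ : Measure α} [IsFiniteMeasure μ] {f : α → E}
    {s : Set α} {δ M : ℝ} (hf : Integrable f μ) (hs : MeasurableSet s)
    (hδ : ∀ᵐ x ∂μ, x ∈ s → ‖f x‖ ≤ δ) (hM : ∀ᵐ x ∂μ, ‖f x‖ ≤ M) :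
    ‖∫ x, f x ∂μ‖ ≤ δ * μ.real s + M * μ.real sᶜ := by
  rw [← integral_add_compl hs hf]
  refine (norm_add_le _ _).trans (add_le_add ?_ ?_)
  · exact norm_setIntegral_le_of_norm_le_const_ae' (measure_lt_top μ s) hδ
  · exact norm_setIntegral_le_of_norm_le_const_ae' (measure_lt_top μ sᶜ)
      (hM.mono fun x hx _ => hx)

theorem tendstoUniformlyOn_integral_of_tight {ι κ : Type*} {l : Filter ι} (ν : κ → Measure α)
    [∀ t, IsProbabilityMeasure (ν t)] {S : Set κ} {G : ι → α → E} {g : α → E} {C : ℝ}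
    (hGint : ∀ n, ∀ t ∈ S, Integrable (G n) (ν t)) (hgint : ∀ t ∈ S, Integrable g (ν t))
    (hbound : ∀ n, ∀ t ∈ S, ∀ᵐ x ∂(ν t), ‖g x - G n x‖ ≤ C)
    (htight : ∀ ε > 0, ∃ s, MeasurableSet s ∧ (∀ t ∈ S, ν t sᶜ ≤ ENNReal.ofReal ε) ∧
      TendstoUniformlyOn G g l s) :
    TendstoUniformlyOn (fun n t => ∫ x, G n x ∂(ν t)) (fun t => ∫ x, g x ∂(ν t)) l S := by
  rw [Metric.tendstoUniformlyOn_iff]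
  intro ε hε
  set M := max C 1
  have hM : 0 < M := lt_max_of_lt_right one_pos
  obtain ⟨s, hs, hνs, hGs⟩ := htight (ε / (4 * M)) (by positivity)
  filter_upwards [Metric.tendstoUniformlyOn_iff.mp hGs (ε / 4) (by positivity)] with n hn t ht
  have hclose : ∀ᵐ x ∂(ν t), x ∈ s → ‖g x - G n x‖ ≤ ε / 4 :=
    ae_of_all _ fun x hx => (dist_eq_norm (g x) (G n x) ▸ hn x hx).le
  have htail : (ν t).real sᶜ ≤ ε / (4 * M) :=
    ENNReal.toReal_le_of_le_ofReal (by positivity) (hνs t ht)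
  rw [dist_eq_norm, ← integral_sub (hgint t ht) (hGint n t ht)]
  calc ‖∫ x, g x - G n x ∂(ν t)‖
      ≤ ε / 4 * (ν t).real s + C * (ν t).real sᶜ :=
        norm_integral_le_of_norm_le_const_on ((hgint t ht).sub (hGint n t ht)) hs hclose
          (hbound n t ht)
    _ ≤ ε / 4 * 1 + M * (ε / (4 * M)) := by
        gcongr
        exacts [measureReal_le_one, le_max_left C 1]
    _ < ε := by field_simp; linarith

end

theorem subordinated_chernoff_approximation_general
    {X : Type*} [NormedAddCommGroup X] [NormedSpace ℝ X]
    (f₀ : X) (T F : ℝ → X →L[ℝ] X)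
    (hTnorm : ∀ τ : ℝ, 0 ≤ τ → ‖T τ‖ ≤ 1)
    (hFnorm : ∀ τ : ℝ, 0 ≤ τ → ‖F τ‖ ≤ 1)
    (hTcont : Continuous fun τ => T τ f₀)
    (hFmeas : ∀ n : ℕ, StronglyMeasurable fun τ : ℝ => ((F (τ / n)) ^ n) f₀)
    (hconv : ∀ R : ℝ, 0 < R →
      TendstoUniformlyOn (fun (n : ℕ) (τ : ℝ) => ((F (τ / n)) ^ n) f₀)
        (fun τ => T τ f₀) atTop (Set.Icc 0 R))
    (ν : ℝ → Measure ℝ) [∀ t, IsProbabilityMeasure (ν t)]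
    (hνsupp : ∀ t : ℝ, ν t {τ : ℝ | τ < 0} = 0)
    (htail : ∀ T' : ℝ, 0 < T' → ∀ ε : ℝ, 0 < ε → ∃ R : ℝ, 0 < R ∧
      ∀ t ∈ Set.Icc (0 : ℝ) T', ν t (Set.Ici R) < ENNReal.ofReal ε) :
    ∀ T' : ℝ, 0 < T' →
      TendstoUniformlyOn
        (fun (n : ℕ) (t : ℝ) => ∫ τ, ((F (τ / n)) ^ n) f₀ ∂(ν t))
        (fun t => ∫ τ, T τ f₀ ∂(ν t)) atTop (Set.Icc 0 T') := by
  intro T' hT'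
  have hnonneg : ∀ t, ∀ᵐ τ ∂(ν t), 0 ≤ τ := fun t => by
    simpa only [ae_iff, not_le] using hνsupp t
  have hFbound : ∀ (n : ℕ) τ, 0 ≤ τ → ‖((F (τ / n)) ^ n) f₀‖ ≤ ‖f₀‖ := fun n τ hτ =>
    (F (τ / n)).norm_pow_apply_le (hFnorm _ (by positivity)) n f₀
  have hTbound : ∀ τ, 0 ≤ τ → ‖T τ f₀‖ ≤ ‖f₀‖ := fun τ hτ =>
    ((T τ).le_of_opNorm_le (hTnorm τ hτ) f₀).trans_eq (one_mul _)
  refine tendstoUniformlyOn_integral_of_tight ν (C := ‖f₀‖ + ‖f₀‖)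
    (fun n t _ => .of_bound (hFmeas n).aestronglyMeasurable _ ((hnonneg t).mono (hFbound n)))
    (fun t _ => .of_bound hTcont.aestronglyMeasurable _ ((hnonneg t).mono hTbound))
    (fun n t _ => (hnonneg t).mono fun τ hτ =>
      (norm_sub_le _ _).trans (add_le_add (hTbound τ hτ) (hFbound n τ hτ))) ?_
  intro ε hε
  obtain ⟨R, hR, hνR⟩ := htail T' hT' ε hε
  refine ⟨Set.Icc 0 R, measurableSet_Icc, fun t ht => ?_, hconv R hR⟩
  calc ν t (Set.Icc 0 R)ᶜ ≤ ν t ({τ | τ < 0} ∪ Set.Ici R) :=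
        measure_mono fun τ hτ => by
          simp only [Set.mem_compl_iff, Set.mem_Icc, not_and_or, not_le] at hτ
          exact hτ.imp id le_of_lt
    _ ≤ ν t {τ | τ < 0} + ν t (Set.Ici R) := measure_union_le _ _
    _ ≤ ENNReal.ofReal ε := by rw [hνsupp, zero_add]; exact (hνR t ht).le

/-- Theorem 4.3 of the paper: approximation of subordinated (in general non-semigroup)
families `f(t) = ∫ T_τ f₀ ν_t(dτ)` by `f_n(t) = ∫ [F(τ/n)]^n f₀ ν_t(dτ)`,
locally uniformly in `t`. -/
theorem subordinated_chernoff_approximation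
    {X : Type*} [NormedAddCommGroup X] [NormedSpace ℝ X] [CompleteSpace X]
    (f₀ : X) (T F : ℝ → X →L[ℝ] X)
    (hTnorm : ∀ τ : ℝ, 0 ≤ τ → ‖T τ‖ ≤ 1)
    (hFnorm : ∀ τ : ℝ, 0 ≤ τ → ‖F τ‖ ≤ 1)
    (hTcont : Continuous fun τ => T τ f₀)
    (hFmeas : ∀ n : ℕ, StronglyMeasurable fun τ : ℝ => ((F (τ / n)) ^ n) f₀)
    (hconv : ∀ R : ℝ, 0 < R →
      TendstoUniformlyOn (fun (n : ℕ) (τ : ℝ) => ((F (τ / n)) ^ n) f₀)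
        (fun τ => T τ f₀) atTop (Set.Icc 0 R))
    (ν : ℝ → Measure ℝ) [∀ t, IsProbabilityMeasure (ν t)]
    (hνsupp : ∀ t : ℝ, ν t {τ : ℝ | τ < 0} = 0)
    (htail : ∀ T' : ℝ, 0 < T' → ∀ ε : ℝ, 0 < ε → ∃ R : ℝ, 0 < R ∧
      ∀ t ∈ Set.Icc (0 : ℝ) T', ν t (Set.Ici R) < ENNReal.ofReal ε) :
    ∀ T' : ℝ, 0 < T' →
      TendstoUniformlyOn
        (fun (n : ℕ) (t : ℝ) => ∫ τ, ((F (τ / n)) ^ n) f₀ ∂(ν t))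
        (fun t => ∫ τ, T τ f₀ ∂(ν t)) atTop (Set.Icc 0 T') :=
  subordinated_chernoff_approximation_general f₀ T F hTnorm hFnorm hTcont hFmeas hconv ν hνsupp
    htail
end
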